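/- Let n ≥ 2, k ≥ 1, and let α, β ∈ [n]^{k+1} be distinct positions. Then n(n−1) · |{A ∈ L_n^k : A(α) = 1 and A(β) = 1}| ≤ |L_n^k|; equivalently, for A drawn uniformly at random from L_n^k, Pr[A(α) = A(β) = 1] ≤ 1/(n(n−1)). -/

import Mathlib

open scoped Classical

/-- `A : [n]^{k+1} → {0,1}` is an order-`n` `k`-dimensional permutation if every
line (obtained by fixing all coordinates but one) contains exactly one `1`. -/
def IsHDPerm (n k : ℕ) (A : (Fin (k + 1) → Fin n) → Bool) : Prop :=
  ∀ (j : Fin (k + 1)) (x : Fin (k + 1) → Fin n),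
    ∃! t : Fin n, A (Function.update x j t) = true

/-- `L_n^k`: the finite set of order-`n` `k`-dimensional permutations. -/
noncomputable def HDPerms (n k : ℕ) : Finset ((Fin (k + 1) → Fin n) → Bool) :=
  Finset.univ.filter (fun A => IsHDPerm n k A)

/-- A monotone subsequence of length `m` in `A`: a sequence of `m` support
positions that is strictly monotone (in some direction) in every coordinate. -/
def IsMonoSub (n k m : ℕ) (A : (Fin (k + 1) → Fin n) → Bool)
    (α : Fin m → (Fin (k + 1) → Fin n)) : Prop :=
  (∀ i, A (α i) = true) ∧
    ∀ j : Fin (k + 1), StrictMono (fun i => α i j) ∨ StrictAnti (fun i => α i j)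

/-- `H(A)`: the maximum length of a monotone subsequence of `A`. -/
noncomputable def HLen (n k : ℕ) (A : (Fin (k + 1) → Fin n) → Bool) : ℕ :=
  sSup {m : ℕ | ∃ α : Fin m → (Fin (k + 1) → Fin n), IsMonoSub n k m A α}

/-- The strict partial order `<_c` on `[n]^{k+1}` induced by `c ∈ {0,1}^{k+1}`. -/
def cLT {n k : ℕ} (c : Fin (k + 1) → Bool) (x y : Fin (k + 1) → Fin n) : Prop :=
  ∀ i, if c i then x i < y i else y i < x i

/-- A `<_c`-monotone subsequence of length `m` in `A`: a `<_c`-chain of `m`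
support positions. -/
def IsCMonoSub (n k m : ℕ) (c : Fin (k + 1) → Bool)
    (A : (Fin (k + 1) → Fin n) → Bool) (α : Fin m → (Fin (k + 1) → Fin n)) : Prop :=
  (∀ i, A (α i) = true) ∧ ∀ i j : Fin m, i < j → cLT c (α i) (α j)

namespace PairAux

variable {n k : ℕ}

/-- Applying a permutation `σ` to the values of coordinate `j`. -/
def coordMap (j : Fin (k + 1)) (σ : Equiv.Perm (Fin n)) :
    (Fin (k + 1) → Fin n) ≃ (Fin (k + 1) → Fin n) where
  toFun x := Function.update x j (σ (x j))
  invFun x := Function.update x j (σ.symm (x j))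
  left_inv x := by
    funext i
    by_cases h : i = j <;> simp [h, Function.update_apply]
  right_inv x := by
    funext i
    by_cases h : i = j <;> simp [h, Function.update_apply]

lemma coordMap_apply (j : Fin (k + 1)) (σ : Equiv.Perm (Fin n)) (x) :
    coordMap j σ x = Function.update x j (σ (x j)) := rfl

lemma coordMap_update_self (j : Fin (k + 1)) (σ : Equiv.Perm (Fin n)) (x) (t : Fin n) :
    coordMap j σ (Function.update x j t) = Function.update x j (σ t) := by
  funext i
  by_cases h : i = j <;> simp [coordMap_apply, Function.update_apply, h]

lemma coordMap_update_ne {j j' : Fin (k + 1)} (hne : j' ≠ j) (σ : Equiv.Perm (Fin n))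
    (x) (t : Fin n) :
    coordMap j σ (Function.update x j' t) = Function.update (coordMap j σ x) j' t := by
  funext i
  by_cases h1 : i = j' <;> by_cases h2 : i = j <;>
    simp_all [coordMap_apply, Function.update_apply]

lemma coordMap_cancel (j : Fin (k + 1)) (σ : Equiv.Perm (Fin n)) (x) :
    coordMap j σ (coordMap j σ.symm x) = x := by
  rw [show coordMap j σ.symm x = Function.update x j (σ.symm (x j)) from rfl,
    coordMap_update_self, Equiv.apply_symm_apply, Function.update_eq_self]

lemma coordMap_cancel' (j : Fin (k + 1)) (σ : Equiv.Perm (Fin n)) (x) :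
    coordMap j σ.symm (coordMap j σ x) = x := by
  rw [show coordMap j σ x = Function.update x j (σ (x j)) from rfl,
    coordMap_update_self, Equiv.symm_apply_apply, Function.update_eq_self]

lemma mem_HDPerms {A : (Fin (k + 1) → Fin n) → Bool} :
    A ∈ HDPerms n k ↔ IsHDPerm n k A := by simp [HDPerms]

lemma isHDPerm_comp (A : (Fin (k + 1) → Fin n) → Bool) (hA : IsHDPerm n k A)
    (j : Fin (k + 1)) (σ : Equiv.Perm (Fin n)) :
    IsHDPerm n k (fun x => A (coordMap j σ x)) := by
  intro j' x
  by_cases hj : j' = j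
  · subst hj
    obtain ⟨t₀, h₀, hu⟩ := hA j' x
    refine ⟨σ.symm t₀, ?_, fun t ht => ?_⟩
    · simp only [coordMap_update_self, Equiv.apply_symm_apply]
      exact h₀
    · simp only [coordMap_update_self] at ht
      exact (Equiv.eq_symm_apply σ).mpr (hu _ ht)
  · simp only [coordMap_update_ne hj]
    exact hA j' (coordMap j σ x)

/-- Re-coordinatizing by `coordMap j σ` preserves the number of permutations
satisfying a given property. -/
lemma card_filter_coordMap (j : Fin (k + 1)) (σ : Equiv.Perm (Fin n))
    (P Q : ((Fin (k + 1) → Fin n) → Bool) → Prop) [DecidablePred P] [DecidablePred Q]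
    (hPQ : ∀ A, Q A ↔ P (fun x => A (coordMap j σ x))) :
    ((HDPerms n k).filter Q).card = ((HDPerms n k).filter P).card := by
  classical
  rw [Finset.filter_congr (fun A _ => hPQ A)]
  apply Finset.card_nbij' (i := fun A => fun x => A (coordMap j σ x))
    (j := fun A => fun x => A (coordMap j σ.symm x))
  · intro A hA
    rw [Finset.mem_coe, Finset.mem_filter] at hA ⊢
    exact ⟨mem_HDPerms.mpr (isHDPerm_comp A (mem_HDPerms.mp hA.1) j σ), hA.2⟩
  · intro A hA
    rw [Finset.mem_coe, Finset.mem_filter] at hA ⊢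
    refine ⟨mem_HDPerms.mpr (isHDPerm_comp A (mem_HDPerms.mp hA.1) j σ.symm), ?_⟩
    simpa only [coordMap_cancel'] using hA.2
  · intro A _
    funext x
    simp only [coordMap_cancel]
  · intro A _
    funext x
    simp only [coordMap_cancel']

/-- The index on the line through `x` in direction `j` where `A` is `1`. -/
noncomputable def lineIdx (j : Fin (k + 1)) (x : Fin (k + 1) → Fin n)
    (A : (Fin (k + 1) → Fin n) → Bool) : Fin n :=
  if h : ∃! t : Fin n, A (Function.update x j t) = true then h.exists.choose else x j

lemma lineIdx_eq_iff {j : Fin (k + 1)} {x : Fin (k + 1) → Fin n}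
    {A : (Fin (k + 1) → Fin n) → Bool} (hA : IsHDPerm n k A) (t : Fin n) :
    lineIdx j x A = t ↔ A (Function.update x j t) = true := by
  have h := hA j x
  unfold lineIdx
  rw [dif_pos h]
  constructor
  · rintro rfl
    exact h.exists.choose_spec
  · intro ht
    exact h.unique h.exists.choose_spec ht

/-- Counting permutations with property `P` by partitioning along a line. -/
lemma card_filter_line_sum (j : Fin (k + 1)) (x : Fin (k + 1) → Fin n)
    (P : ((Fin (k + 1) → Fin n) → Bool) → Prop) [DecidablePred P]
    (Q : Fin n → ((Fin (k + 1) → Fin n) → Bool) → Prop) [∀ t, DecidablePred (Q t)]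
    (hQ : ∀ t A, Q t A ↔ (P A ∧ A (Function.update x j t) = true)) :
    ((HDPerms n k).filter P).card = ∑ t : Fin n, ((HDPerms n k).filter (Q t)).card := by
  classical
  rw [Finset.card_eq_sum_card_fiberwise
    (f := lineIdx j x) (t := Finset.univ) (fun _ _ => Finset.mem_univ _)]
  refine Finset.sum_congr rfl fun t _ => ?_
  congr 1
  ext A
  simp only [Finset.mem_filter, Finset.mem_univ, true_and, HDPerms]
  constructor
  · rintro ⟨⟨hA, hP⟩, hft⟩
    exact ⟨hA, (hQ t A).mpr ⟨hP, (lineIdx_eq_iff hA t).mp hft⟩⟩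
  · rintro ⟨hA, hQt⟩
    obtain ⟨hP, ht⟩ := (hQ t A).mp hQt
    exact ⟨⟨hA, hP⟩, (lineIdx_eq_iff hA t).mpr ht⟩

end PairAux

open PairAux in
/-- For distinct positions `α, β ∈ [n]^{k+1}`, at most a `1/(n(n-1))` fraction
of all `A ∈ L_n^k` satisfy `A(α) = A(β) = 1`. -/
theorem pair_position_probability (n k : ℕ) (hn : 2 ≤ n) (hk : 1 ≤ k)
    (α β : Fin (k + 1) → Fin n) (hab : α ≠ β) :
    n * (n - 1) *
      ((HDPerms n k).filter (fun A => A α = true ∧ A β = true)).card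
      ≤ (HDPerms n k).card := by
  by_cases hcase : ∃ j₁ j₂ : Fin (k + 1), j₁ ≠ j₂ ∧ α j₁ ≠ β j₁ ∧ α j₂ ≠ β j₂
  · obtain ⟨j₁, j₂, hjj, h1, h2⟩ := hcase
    -- Step 1: (n-1) * T ≤ N
    have hterm : ∀ t : Fin n, t ≠ α j₂ →
        ((HDPerms n k).filter fun A =>
            A α = true ∧ A (Function.update β j₂ t) = true).card
          = ((HDPerms n k).filter fun A => A α = true ∧ A β = true).card := by
      intro t ht
      have e1 : coordMap j₂ (Equiv.swap t (β j₂)) α = α := by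
        rw [coordMap_apply, Equiv.swap_apply_of_ne_of_ne (Ne.symm ht) h2,
          Function.update_eq_self]
      have e2 : coordMap j₂ (Equiv.swap t (β j₂)) β = Function.update β j₂ t := by
        rw [coordMap_apply, Equiv.swap_apply_right]
      apply card_filter_coordMap j₂ (Equiv.swap t (β j₂))
      intro A
      simp only [e1, e2]
    have hstep1 : (n - 1) *
        ((HDPerms n k).filter fun A => A α = true ∧ A β = true).card
        ≤ ((HDPerms n k).filter fun A => A α = true).card := by
      have hsum := card_filter_line_sum j₂ β (fun A => A α = true)
        (fun t A => A α = true ∧ A (Function.update β j₂ t) = true)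
        (fun t A => Iff.rfl)
      rw [hsum]
      calc (n - 1) * ((HDPerms n k).filter fun A => A α = true ∧ A β = true).card
          = ∑ t ∈ Finset.univ.erase (α j₂),
              ((HDPerms n k).filter fun A =>
                A α = true ∧ A (Function.update β j₂ t) = true).card := by
            rw [Finset.sum_congr rfl (fun t ht => hterm t (Finset.ne_of_mem_erase ht)),
              Finset.sum_const, Finset.card_erase_of_mem (Finset.mem_univ _),
              Finset.card_univ, Fintype.card_fin, smul_eq_mul]
        _ ≤ _ := Finset.sum_le_sum_of_subset (Finset.erase_subset _ _)
    -- Step 2: card L = n * N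
    have hterm2 : ∀ s : Fin n,
        ((HDPerms n k).filter fun A => A (Function.update α j₁ s) = true).card
          = ((HDPerms n k).filter fun A => A α = true).card := by
      intro s
      have e1 : coordMap j₁ (Equiv.swap (α j₁) s) α = Function.update α j₁ s := by
        rw [coordMap_apply, Equiv.swap_apply_left]
      apply card_filter_coordMap j₁ (Equiv.swap (α j₁) s)
      intro A
      simp only [e1]
    have hstep2 : (HDPerms n k).card
        = n * ((HDPerms n k).filter fun A => A α = true).card := by
      have hsum := card_filter_line_sum j₁ α (fun _ => True)
        (fun s A => A (Function.update α j₁ s) = true)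
        (fun s A => by simp)
      rw [Finset.filter_true] at hsum
      rw [hsum, Finset.sum_congr rfl (fun s _ => hterm2 s), Finset.sum_const,
        Finset.card_univ, Fintype.card_fin, smul_eq_mul]
    calc n * (n - 1) * ((HDPerms n k).filter fun A => A α = true ∧ A β = true).card
        = n * ((n - 1) *
            ((HDPerms n k).filter fun A => A α = true ∧ A β = true).card) := by
          ring
      _ ≤ n * ((HDPerms n k).filter fun A => A α = true).card :=
          Nat.mul_le_mul_left n hstep1
      _ = (HDPerms n k).card := hstep2.symm
  · -- α and β differ in exactly one coordinate: the filtered set is empty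
    push_neg at hcase
    obtain ⟨j₀, hj₀⟩ := Function.ne_iff.mp hab
    have hβeq : β = Function.update α j₀ (β j₀) := by
      funext i
      by_cases h : i = j₀
      · subst h; simp
      · rw [Function.update_apply, if_neg h]
        exact (hcase j₀ i (fun he => h he.symm) hj₀).symm
    have hempty : (HDPerms n k).filter (fun A => A α = true ∧ A β = true) = ∅ := by
      rw [Finset.filter_eq_empty_iff]
      rintro A hA ⟨hα, hβ⟩
      obtain ⟨t₀, _, hu⟩ := (mem_HDPerms.mp hA) j₀ α
      have e1 : α j₀ = t₀ := hu _ (show A (Function.update α j₀ (α j₀)) = true by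
        rwa [Function.update_eq_self])
      have e2 : β j₀ = t₀ := hu _ (show A (Function.update α j₀ (β j₀)) = true by
        rwa [hβeq] at hβ)
      exact hj₀ (e1.trans e2.symm)
    rw [hempty]
    simp
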